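/- Let Q : dom Q ⊆ H → K be a linear operator. An element φ ∈ H belongs to ran Q* (range of the adjoint relation Q*) if and only if there exists c_φ < ∞ such that |⟨f, φ⟩| ≤ c_φ ‖Q f‖ for all f ∈ dom Q. -/

import Mathlib

/-!
Membership `φ ∈ ran Q*` says exactly that `⟪φ, f⟫ = ⟪k, Q f⟫` on `dom Q` for some `k`, so
Cauchy–Schwarz gives the bound with `c_φ = ‖k‖`. Conversely, the bound makes `Q f ↦ ⟪φ, f⟫` a
well-defined bounded functional on `ran Q`; extend it to `K` by Hahn–Banach and represent the
extension by some `k` via the Riesz representation theorem.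
-/

open scoped InnerProductSpace
open Filter Topology

noncomputable section

variable {E F F' : Type*}
  [NormedAddCommGroup E] [InnerProductSpace ℂ E] [CompleteSpace E]
  [NormedAddCommGroup F] [InnerProductSpace ℂ F] [CompleteSpace F]
  [NormedAddCommGroup F'] [InnerProductSpace ℂ F'] [CompleteSpace F']

/-- The domain of a linear relation from `E` to `F`. -/
def dom (T : Set (E × F)) : Set E := Prod.fst '' T

/-- The range of a linear relation from `E` to `F`. -/
def ran (T : Set (E × F)) : Set F := Prod.snd '' T

/-- The multivalued part of a linear relation. -/
def mulp (T : Set (E × F)) : Set F := {y | ((0 : E), y) ∈ T}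

/-- The kernel of a linear relation. -/
def kerr (T : Set (E × F)) : Set E := {x | (x, (0 : F)) ∈ T}

/-- The adjoint relation: `T* = {(h,k) : ⟪h, f'⟫ = ⟪k, f⟫ for all (f,f') ∈ T}`. -/
def adj (T : Set (E × F)) : Set (F × E) :=
  {q | ∀ p ∈ T, ⟪q.2, p.1⟫_ℂ = ⟪q.1, p.2⟫_ℂ}

/-- The graph of the linear operator `Q` restricted to the domain `D`. -/
def graphOn (Q : E →ₗ[ℂ] F) (D : Set E) : Set (E × F) :=
  {p | p.1 ∈ D ∧ p.2 = Q p.1}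

/-- The companion relation `J_c = {(Q_c φ, φ' - cφ) : (φ,φ') ∈ S}` of a representing
map `Q` for the form `t(S) - c`. -/
def companion (S : Submodule ℂ (E × E)) (c : ℝ) (Q : E →ₗ[ℂ] F) : Set (F × E) :=
  {r | ∃ p ∈ S, r = (Q p.1, p.2 - (c : ℂ) • p.1)}

theorem LinearMap.exists_comp_rangeRestrict_eq_of_ker_le {R M M₂ M₃ : Type*} [Ring R]
    [AddCommGroup M] [Module R M] [AddCommGroup M₂] [Module R M₂] [AddCommGroup M₃] [Module R M₃]
    (f : M →ₗ[R] M₂) (g : M →ₗ[R] M₃) (h : LinearMap.ker f ≤ LinearMap.ker g) :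
    ∃ g' : LinearMap.range f →ₗ[R] M₃, g' ∘ₗ f.rangeRestrict = g :=
  ⟨(LinearMap.ker f).liftQ g h ∘ₗ f.quotKerEquivRange.symm.toLinearMap, by
    ext x
    have hx : f.quotKerEquivRange (Submodule.Quotient.mk x) = f.rangeRestrict x :=
      Subtype.ext (f.quotKerEquivRange_apply_mk x)
    simp [← hx]⟩

theorem exists_strongDual_comp_eq_of_norm_le {𝕜 V W : Type*} [RCLike 𝕜] [AddCommGroup V]
    [Module 𝕜 V] [NormedAddCommGroup W] [NormedSpace 𝕜 W] (T : V →ₗ[𝕜] W) (ψ : V →ₗ[𝕜] 𝕜)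
    (c : ℝ) (hψ : ∀ v, ‖ψ v‖ ≤ c * ‖T v‖) : ∃ G : StrongDual 𝕜 W, ∀ v, G (T v) = ψ v := by
  have hker : LinearMap.ker T ≤ LinearMap.ker ψ := fun v hv ↦ by
    simpa [LinearMap.mem_ker.mp hv] using hψ v
  obtain ⟨g, hg⟩ := T.exists_comp_rangeRestrict_eq_of_ker_le ψ hker
  have hbound : ∀ y, ‖g y‖ ≤ c * ‖y‖ := by
    rintro ⟨-, v, rfl⟩
    rw [← hg] at hψ
    exact hψ v
  obtain ⟨G, hG, -⟩ := exists_extension_norm_eq _ (g.mkContinuous c hbound)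
  exact ⟨G, fun v ↦ by simpa [← hg] using hG (T.rangeRestrict v)⟩

theorem exists_inner_comp_eq_of_norm_le {𝕜 V W : Type*} [RCLike 𝕜] [AddCommGroup V]
    [Module 𝕜 V] [NormedAddCommGroup W] [InnerProductSpace 𝕜 W] [CompleteSpace W]
    (T : V →ₗ[𝕜] W) (ψ : V →ₗ[𝕜] 𝕜) (c : ℝ) (hψ : ∀ v, ‖ψ v‖ ≤ c * ‖T v‖) :
    ∃ k : W, ∀ v, ⟪k, T v⟫_𝕜 = ψ v := by
  obtain ⟨G, hG⟩ := exists_strongDual_comp_eq_of_norm_le T ψ c hψ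
  exact ⟨(InnerProductSpace.toDual 𝕜 W).symm G, fun v ↦ by
    rw [InnerProductSpace.toDual_symm_apply, hG]⟩

theorem mem_ran_adj_graphOn_iff {H K : Type*} [NormedAddCommGroup H] [InnerProductSpace ℂ H]
    [NormedAddCommGroup K] [InnerProductSpace ℂ K] (Q : H →ₗ[ℂ] K) (D : Set H) (φ : H) :
    φ ∈ ran (adj (graphOn Q D)) ↔ ∃ k : K, ∀ f ∈ D, ⟪φ, f⟫_ℂ = ⟪k, Q f⟫_ℂ := by
  constructor
  · rintro ⟨⟨k, φ⟩, hk, rfl⟩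
    exact ⟨k, fun f hf ↦ hk (f, Q f) ⟨hf, rfl⟩⟩
  · rintro ⟨k, hk⟩
    refine ⟨(k, φ), ?_, rfl⟩
    rintro p ⟨hp, hQp⟩
    rw [hQp]
    exact hk p.1 hp

/-- For a linear operator `Q` with domain `D`, an element `φ ∈ H` belongs to
`ran Q*` if and only if there exists `c_φ` with `|⟪f, φ⟫| ≤ c_φ ‖Q f‖` for all
`f ∈ dom Q`. -/
theorem mem_ran_adj_iff (D : Submodule ℂ E) (Q : E →ₗ[ℂ] F) (φ : E) :
    φ ∈ ran (adj (graphOn Q (D : Set E))) ↔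
      ∃ cφ : ℝ, ∀ f ∈ D, ‖⟪f, φ⟫_ℂ‖ ≤ cφ * ‖Q f‖ := by
  rw [mem_ran_adj_graphOn_iff]
  constructor
  · rintro ⟨k, hk⟩
    refine ⟨‖k‖, fun f hf ↦ ?_⟩
    rw [norm_inner_symm, hk f hf]
    exact norm_inner_le_norm k (Q f)
  · rintro ⟨c, hc⟩
    obtain ⟨k, hk⟩ := exists_inner_comp_eq_of_norm_le (Q.domRestrict D)
      ((innerₛₗ ℂ φ).domRestrict D) c fun f ↦ by simpa [norm_inner_symm] using hc f f.2
    exact ⟨k, fun f hf ↦ (hk ⟨f, hf⟩).symm⟩
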